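/- For the thrice-integrated Wiener covariance k³ with σ² = 1, the mixed second partial derivative ∂²k³(t,t')/∂t∂t' equals k²(t,t'), for t, t' > 0 with t ≠ t'. -/

import Mathlib

/-- Twice-integrated Wiener covariance with `σ² = 1`. -/
noncomputable def k2 (t t' : ℝ) : ℝ :=
  (min t t') ^ 5 / 20 + (|t - t'| / 12) * ((t + t') * (min t t') ^ 3 - (min t t') ^ 4 / 2)

/-- Thrice-integrated Wiener covariance with `σ² = 1`. -/
noncomputable def k3 (t t' : ℝ) : ℝ :=
  (min t t') ^ 7 / 252 +
    (|t - t'| * (min t t') ^ 4 / 720) *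
      (5 * (max t t') ^ 2 + 2 * t * t' + 3 * (min t t') ^ 2)

lemma poly7 (c0 c1 c2 c3 c4 c5 c6 c7 x : ℝ) :
    HasDerivAt (fun y : ℝ => c0 + c1*y + c2*y^2 + c3*y^3 + c4*y^4 + c5*y^5 + c6*y^6 + c7*y^7)
      (c1 + 2*c2*x + 3*c3*x^2 + 4*c4*x^3 + 5*c5*x^4 + 6*c6*x^5 + 7*c7*x^6) x := by
  have h0 := hasDerivAt_const x c0
  have h1 := (hasDerivAt_pow 1 x).const_mul c1
  have h2 := (hasDerivAt_pow 2 x).const_mul c2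
  have h3 := (hasDerivAt_pow 3 x).const_mul c3
  have h4 := (hasDerivAt_pow 4 x).const_mul c4
  have h5 := (hasDerivAt_pow 5 x).const_mul c5
  have h6 := (hasDerivAt_pow 6 x).const_mul c6
  have h7 := (hasDerivAt_pow 7 x).const_mul c7
  have h := ((((((h0.add h1).add h2).add h3).add h4).add h5).add h6).add h7
  have hf : (fun y : ℝ => c0 + c1*y + c2*y^2 + c3*y^3 + c4*y^4 + c5*y^5 + c6*y^6 + c7*y^7)
      = fun y : ℝ => c0 + c1*y^1 + c2*y^2 + c3*y^3 + c4*y^4 + c5*y^5 + c6*y^6 + c7*y^7 := by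
    funext y; ring
  rw [hf]
  refine h.congr_deriv ?_
  push_cast
  ring

/-- The mixed second partial derivative `∂²k³/∂t∂t'` equals `k²(t,t')`. -/
theorem k3_mixed_deriv (t t' : ℝ) (ht : 0 < t) (ht' : 0 < t') (hne : t ≠ t') :
    deriv (fun a => deriv (fun b => k3 a b) t') t = k2 t t' := by
  rcases lt_or_gt_of_ne hne with h | h
  · -- case t < t'
    have h1 : (fun a => deriv (fun b => k3 a b) t') =ᶠ[nhds t]
        (fun a : ℝ => 0 + 0*a + 0*a^2 + 0*a^3 + (t'^2/48)*a^4 + (-(t'/120))*a^5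
          + (1/720)*a^6 + 0*a^7) := by
      filter_upwards [Iio_mem_nhds h] with a ha
      replace ha := Set.mem_Iio.mp ha
      have h2 : (fun b => k3 a b) =ᶠ[nhds t']
          (fun b : ℝ => (a^7/252 - a^7/240) + (a^6/720)*b + (-(a^5/240))*b^2 + (a^4/144)*b^3
            + 0*b^4 + 0*b^5 + 0*b^6 + 0*b^7) := by
        filter_upwards [Ioi_mem_nhds ha] with b hb
        replace hb := Set.mem_Ioi.mp hb
        simp only [k3, min_eq_left hb.le, max_eq_right hb.le, abs_of_neg (sub_neg.mpr hb)]
        ring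
      rw [h2.deriv_eq, (poly7 _ _ _ _ _ _ _ _ t').deriv]
      ring
    rw [h1.deriv_eq, (poly7 _ _ _ _ _ _ _ _ t).deriv]
    simp only [k2, min_eq_left h.le, abs_of_neg (sub_neg.mpr h)]
    ring
  · -- case t' < t
    have h1 : (fun a => deriv (fun b => k3 a b) t') =ᶠ[nhds t]
        (fun a : ℝ => (-(t'^6/720)) + (t'^5/120)*a + (-(t'^4/48))*a^2 + (t'^3/36)*a^3
          + 0*a^4 + 0*a^5 + 0*a^6 + 0*a^7) := by
      filter_upwards [Ioi_mem_nhds h] with a ha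
      replace ha := Set.mem_Ioi.mp ha
      have h2 : (fun b => k3 a b) =ᶠ[nhds t']
          (fun b : ℝ => 0 + 0*b + 0*b^2 + 0*b^3 + (a^3/144)*b^4 + (-(a^2/240))*b^5
            + (a/720)*b^6 + (1/252 - 1/240)*b^7) := by
        filter_upwards [Iio_mem_nhds ha] with b hb
        replace hb := Set.mem_Iio.mp hb
        simp only [k3, min_eq_right hb.le, max_eq_left hb.le, abs_of_pos (sub_pos.mpr hb)]
        ring
      rw [h2.deriv_eq, (poly7 _ _ _ _ _ _ _ _ t').deriv]
      ring
    rw [h1.deriv_eq, (poly7 _ _ _ _ _ _ _ _ t).deriv]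
    simp only [k2, min_eq_right h.le, abs_of_pos (sub_pos.mpr h)]
    ring
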